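/- Let εX, εY ∈ (−1, 1) and let λ₁ be the unique real root of the characteristic polynomial of A_{C0}, the other two complex roots being the non-real conjugate pair λ₂, λ₃. If εX + εY < 0 then λ₁ > 1 and |λ₂| = |λ₃| < 1; if εX + εY > 0 then λ₁ < 1 and |λ₂| = |λ₃| > 1. -/

import Mathlib

open Matrix Polynomial

/-- The matrix `A_{C0}` governing the dynamics along the cycle `C₀` in logarithmic
coordinates. -/
noncomputable def AC0 (εX εY : ℝ) : Matrix (Fin 3) (Fin 3) ℝ :=
  !![-(1+εX)/2, 0, (3+εX^2)/4;
     1, 0, (1-εX)/2;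
     (1-εY)/2, 1, -(1+εY)/2 + (1-εX)*(1-εY)/4]

lemma charpoly_AC0 (a b : ℝ) : (AC0 a b).charpoly =
    X^3 + C ((3 + 3*a + 3*b - a*b)/4) * X^2 + C ((-3 + 3*a + 3*b + a*b)/4) * X - C 1 := by
  apply Polynomial.funext
  intro r
  rw [Matrix.charpoly, ← Polynomial.coe_evalRingHom, RingHom.map_det]
  rw [Matrix.det_fin_three]
  simp [charmatrix_apply, AC0, Matrix.diagonal]
  ring


theorem stmt15 (εX εY : ℝ) (hX : εX ∈ Set.Ioo (-1:ℝ) 1) (hY : εY ∈ Set.Ioo (-1:ℝ) 1)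
    (l : ℝ) (hl : (AC0 εX εY).charpoly.IsRoot l)
    (μ : ℂ) (hμ : ((AC0 εX εY).charpoly.map (algebraMap ℝ ℂ)).IsRoot μ)
    (hμim : μ.im ≠ 0) :
    (εX + εY < 0 → 1 < l ∧ ‖μ‖ < 1) ∧
    (0 < εX + εY → l < 1 ∧ 1 < ‖μ‖) := by
  rw [charpoly_AC0] at hl hμ
  set c2 : ℝ := (3 + 3*εX + 3*εY - εX*εY)/4 with hc2
  set c1 : ℝ := (-3 + 3*εX + 3*εY + εX*εY)/4 with hc1
  simp only [IsRoot, Polynomial.map_add, Polynomial.map_sub, Polynomial.map_mul,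
    Polynomial.map_pow, Polynomial.map_X, Polynomial.map_C, eval_add, eval_sub, eval_mul,
    eval_pow, eval_X, eval_C, _root_.map_one, Polynomial.map_one, eval_one] at hl hμ
  set x : ℝ := μ.re with hx
  set y : ℝ := μ.im with hy
  have hyne : y ≠ 0 := hμim
  have hμeq : μ = Complex.mk x y := by simp [hx, hy, Complex.ext_iff]
  have hμ3 : μ^3 = Complex.mk (x^3-3*x*y^2) (3*x^2*y-y^3) := by
    rw [hμeq]; rw [pow_succ, pow_two]; simp [Complex.ext_iff, Complex.mul_re, Complex.mul_im]; constructor <;> ring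
  have hμ2 : μ^2 = Complex.mk (x^2-y^2) (2*x*y) := by
    rw [hμeq, pow_two]; simp [Complex.ext_iff, Complex.mul_re, Complex.mul_im]
    constructor <;> ring
  rw [hμ3, hμ2, hμeq, Complex.ext_iff] at hμ
  simp only [Complex.add_re, Complex.add_im, Complex.sub_re, Complex.sub_im, Complex.mul_re, Complex.mul_im, Complex.coe_algebraMap, Complex.ofReal_re, Complex.ofReal_im, Complex.one_re, Complex.one_im, Complex.zero_re, Complex.zero_im, mul_zero, zero_mul, add_zero, sub_zero, zero_add] at hμ
  obtain ⟨hre, him⟩ := hμ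
  -- him : y * (3x² - y² + 2c₂x + c₁) = 0, cancel y
  have him' : 3*x^2 - y^2 + 2*c2*x + c1 = 0 := by
    have h0 : y * (3*x^2 - y^2 + 2*c2*x + c1) = 0 := by linear_combination him
    exact (mul_eq_zero.mp h0).resolve_left hyne
  have hy2 : 0 < y^2 := by positivity
  -- m(2x + c₂) = -1
  have hm : (x^2 + y^2) * (2*x + c2) = -1 := by linear_combination -hre + x * him'
  -- factorization of p(l)
  have hfac : (l^2 - 2*x*l + (x^2+y^2)) * (l + 2*x + c2) = 0 := by
    linear_combination hl - l * him' + hm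
  have hqpos : 0 < l^2 - 2*x*l + (x^2+y^2) := by nlinarith [sq_nonneg (l - x)]
  have hleq : l + 2*x + c2 = 0 := (mul_eq_zero.mp hfac).resolve_left (ne_of_gt hqpos)
  have hlm : l * (x^2 + y^2) = 1 := by linear_combination (x^2+y^2)*hleq - hm
  have hmpos : 0 < x^2 + y^2 := by positivity
  have hlpos : 0 < l := by nlinarith
  have hp1 : (1 - 2*x + (x^2+y^2)) * (1 - l) = (3/2) * (εX + εY) := by
    linear_combination (2*x-1)*hleq - him' - hlm + hc2 + hc1
  have h1pos : 0 < 1 - 2*x + (x^2+y^2) := by nlinarith [sq_nonneg (1 - x)]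
  have habs : ‖μ‖^2 = x^2 + y^2 := by
    rw [Complex.sq_norm, Complex.normSq_apply]; ring
  have habsnn : 0 ≤ ‖μ‖ := norm_nonneg μ
  clear hl hre him him' hm hfac hμ3 hμ2 hμeq hleq hc2 hc1
  set A := ‖μ‖ with hA
  clear_value A
  clear hX hY
  constructor
  · intro h
    have h1 : 1 < l := by
      by_contra hc; push_neg at hc
      nlinarith [mul_nonneg h1pos.le (by linarith : (0:ℝ) ≤ 1 - l)]
    have h2 : x^2 + y^2 < 1 := by nlinarith [mul_pos hmpos (sub_pos.mpr h1)]
    refine ⟨h1, ?_⟩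
    rw [← pow_lt_one_iff_of_nonneg habsnn (two_ne_zero), habs]; exact h2
  · intro h
    have h1 : l < 1 := by
      by_contra hc; push_neg at hc
      nlinarith [mul_nonpos_of_nonneg_of_nonpos h1pos.le (by linarith : 1 - l ≤ 0)]
    have h2 : 1 < x^2 + y^2 := by nlinarith [mul_pos hmpos (sub_pos.mpr h1), hlpos]
    refine ⟨h1, ?_⟩
    rw [← one_lt_pow_iff_of_nonneg habsnn (two_ne_zero), habs]; exact h2
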